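/- arXiv:2205.09407 — 6 statements merged into one kernel-verified Lean document; each statement's English description precedes it below -/
import Mathlib

section
/- Let m > 1, 1 < p < m, let σ be a real number with σ(m−1) + 2(p−1) > 0 and let N ≥ 1 be an integer; set α = (σ+2)/(σ(m−1)+2(p−1)) and β = (m−p)/(σ(m−1)+2(p−1)). Then there is no R > 0 and no twice continuously differentiable positive function f : (R,∞) → (0,∞) solving (f^m)''(ξ) + ((N−1)/ξ)(f^m)'(ξ) − α f(ξ) + β ξ f'(ξ) + ξ^σ f(ξ)^p = 0 on (R,∞) such that, as ξ → ∞, simultaneously ξ^σ f(ξ)^{p−1} → +∞, ξ^{−(σ+2)} f(ξ)^{m−p} → 0, and ξ^{−(σ+1)} f(ξ)^{m−p−1} f'(ξ) → 0. -/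
/-!
Multiplying the equation by `ξ ^ (N - 1)` shows that the flux
`H = ξ ^ (N - 1) (f ^ m)' + β ξ ^ N f` satisfies `H' = ξ ^ (N - 1) f (α + β N - Z)` with
`Z = ξ ^ σ f ^ (p - 1)`. Since `Z → ∞`, eventually `H' ≤ -ξ ^ (N + σ - 1) f ^ p / 2`, and at a
critical point of `f` the equation reads `(f ^ m)'' = f (α - Z) < 0`, so `f` is eventually monotone.
If `f` is eventually nondecreasing, `H ≥ β ξ ^ N f` grows without bound although `H` decreases.
If `f` is eventually nonincreasing, integrating `H'` over `[ξ, 2ξ]` and bounding `H (2ξ)` from below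
by the third limit, which says `(f ^ m)' = o(ξ ^ (σ + 1) f ^ p)`, gives `ξ ^ σ f(2ξ) ^ p ≤ K f(ξ)`.
In terms of `Z` this is `log Z(2ξ) ≤ log Z(ξ) / p + C`, which keeps `log Z` bounded along
`2 ^ k ξ₀`, contradicting `Z → ∞`.
-/

open Set Filter Topology Asymptotics

lemma antitoneOn_of_hasDerivAt_nonpos {D : Set ℝ} (hD : Convex ℝ D) {f f' : ℝ → ℝ}
    (hf : ∀ x ∈ D, HasDerivAt f (f' x) x) (hf' : ∀ x ∈ D, f' x ≤ 0) : AntitoneOn f D :=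
  antitoneOn_of_hasDerivWithinAt_nonpos hD (fun x hx => (hf x hx).continuousAt.continuousWithinAt)
    (fun x hx => (hf x (interior_subset hx)).hasDerivWithinAt)
    (fun x hx => hf' x (interior_subset hx))

lemma monotoneOn_of_hasDerivAt_nonneg {D : Set ℝ} (hD : Convex ℝ D) {f f' : ℝ → ℝ}
    (hf : ∀ x ∈ D, HasDerivAt f (f' x) x) (hf' : ∀ x ∈ D, 0 ≤ f' x) : MonotoneOn f D :=
  monotoneOn_of_hasDerivWithinAt_nonneg hD (fun x hx => (hf x hx).continuousAt.continuousWithinAt)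
    (fun x hx => (hf x (interior_subset hx)).hasDerivWithinAt)
    (fun x hx => hf' x (interior_subset hx))

lemma nonpos_of_hasDerivAt_neg_of_eq_zero {g g' : ℝ → ℝ} {a : ℝ}
    (hg : ∀ x ≥ a, HasDerivAt g (g' x) x) (hzero : ∀ x ≥ a, g x = 0 → g' x < 0) (ha : g a ≤ 0) :
    ∀ x ≥ a, g x ≤ 0 := fun _ hx =>
  image_le_of_deriv_right_lt_deriv_boundary (B := 0) (B' := 0)
    (fun y hy => (hg y hy.1).continuousAt.continuousWithinAt)
    (fun y hy => (hg y hy.1).hasDerivWithinAt) ha (fun _ => hasDerivAt_const _ _)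
    (fun y hy => hzero y hy.1) ⟨hx, le_rfl⟩

lemma min_one_two_rpow_mul_rpow_le {e ξ t : ℝ} (hξ : 0 < ξ) (ht : t ∈ Icc ξ (2 * ξ)) :
    min 1 (2 ^ e) * ξ ^ e ≤ t ^ e := by
  rcases le_total 0 e with he | he
  · calc min 1 (2 ^ e) * ξ ^ e ≤ 1 * ξ ^ e := by gcongr; exact min_le_left _ _
      _ ≤ t ^ e := by rw [one_mul]; exact Real.rpow_le_rpow hξ.le ht.1 he
  · calc min 1 (2 ^ e) * ξ ^ e ≤ 2 ^ e * ξ ^ e := by gcongr; exact min_le_right _ _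
      _ = (2 * ξ) ^ e := (Real.mul_rpow zero_le_two hξ.le).symm
      _ ≤ t ^ e := Real.rpow_le_rpow_of_nonpos (hξ.trans_le ht.1) ht.2 he

lemma image_two_mul_le_sub_of_deriv_le_neg_rpow_mul {H H' φ : ℝ → ℝ} {e ξ : ℝ} (hξ : 0 < ξ)
    (hH : ∀ t ∈ Icc ξ (2 * ξ), HasDerivAt H (H' t) t)
    (hH' : ∀ t ∈ Icc ξ (2 * ξ), H' t ≤ -(t ^ e * φ t))
    (hφ : AntitoneOn φ (Icc ξ (2 * ξ))) (hφ0 : 0 ≤ φ (2 * ξ)) :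
    H (2 * ξ) ≤ H ξ - min 1 (2 ^ e) * ξ ^ (e + 1) * φ (2 * ξ) := by
  have hξ2 : ξ ≤ 2 * ξ := by linarith
  have hmem : 2 * ξ ∈ Icc ξ (2 * ξ) := right_mem_Icc.2 hξ2
  have hderiv : ∀ t ∈ interior (Icc ξ (2 * ξ)),
      deriv H t ≤ -(min 1 (2 ^ e) * ξ ^ e * φ (2 * ξ)) := by
    intro t ht
    have ht' := interior_subset ht
    rw [(hH t ht').deriv]
    refine (hH' t ht').trans (neg_le_neg ?_)
    exact mul_le_mul (min_one_two_rpow_mul_rpow_le hξ ht') (hφ ht' hmem ht'.2) hφ0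
      (Real.rpow_nonneg (hξ.le.trans ht'.1) e)
  have := (convex_Icc ξ (2 * ξ)).image_sub_le_mul_sub_of_deriv_le
    (fun t ht => (hH t ht).continuousAt.continuousWithinAt)
    (fun t ht => (hH t (interior_subset ht)).differentiableAt.differentiableWithinAt)
    hderiv ξ (left_mem_Icc.2 hξ2) (2 * ξ) hmem hξ2
  rw [Real.rpow_add_one hξ.ne']
  linear_combination this

lemma bddAbove_range_of_le_div_add {v : ℕ → ℝ} {p C : ℝ} (hp : 1 < p)
    (h : ∀ k, v (k + 1) ≤ v k / p + C) : BddAbove (range v) := by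
  set B := max (v 0) (p * C / (p - 1))
  have hB : B / p + C ≤ B := by
    have hpC : p * C ≤ B * (p - 1) := (div_le_iff₀ (by linarith)).1 (le_max_right _ _)
    rw [div_add' _ _ _ (by positivity), div_le_iff₀ (by positivity)]
    linarith
  refine ⟨B, forall_mem_range.2 fun k => ?_⟩
  induction k with
  | zero => exact le_max_left _ _
  | succ k ih =>
    calc v (k + 1) ≤ v k / p + C := h k
      _ ≤ B / p + C := by gcongr
      _ ≤ B := hB

lemma not_tendsto_atTop_of_eventually_le_div_add {u : ℝ → ℝ} {p C : ℝ} (hp : 1 < p)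
    (h : ∀ᶠ x in atTop, u (2 * x) ≤ u x / p + C) : ¬ Tendsto u atTop atTop := by
  intro hu
  obtain ⟨x₀, hx₀⟩ := eventually_atTop.1 (h.and (eventually_ge_atTop 1))
  have hseq : ∀ k : ℕ, x₀ ≤ 2 ^ k * x₀ := fun k =>
    le_mul_of_one_le_left (by linarith [(hx₀ x₀ le_rfl).2]) (one_le_pow₀ one_le_two)
  have hrec : ∀ k : ℕ, u (2 ^ (k + 1) * x₀) ≤ u (2 ^ k * x₀) / p + C := fun k => by
    rw [pow_succ, mul_comm _ (2 : ℝ), mul_assoc]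
    exact (hx₀ _ (hseq k)).1
  have hlim : Tendsto (fun k : ℕ => 2 ^ k * x₀) atTop atTop :=
    (tendsto_pow_atTop_atTop_of_one_lt one_lt_two).atTop_mul_const
      (by linarith [(hx₀ x₀ le_rfl).2])
  exact not_bddAbove_of_tendsto_atTop (hu.comp hlim) (bddAbove_range_of_le_div_add hp hrec)

lemma log_two_mul_rpow_mul_rpow_le {σ p K x a b : ℝ} (hp : 1 < p) (hK : 0 < K) (hx : 0 < x)
    (ha : 0 < a) (hb : 0 < b) (h : x ^ σ * b ^ p ≤ K * a) :
    Real.log ((2 * x) ^ σ * b ^ (p - 1)) ≤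
      Real.log (x ^ σ * a ^ (p - 1)) / p + (σ * Real.log 2 + (p - 1) / p * Real.log K) := by
  have hlog := Real.log_le_log (by positivity) h
  rw [Real.log_mul (by positivity) (by positivity), Real.log_mul hK.ne' ha.ne',
    Real.log_rpow hx, Real.log_rpow hb] at hlog
  rw [Real.log_mul (by positivity) (by positivity), Real.log_mul (by positivity) (by positivity),
    Real.log_rpow (by positivity), Real.log_rpow hx, Real.log_rpow hb, Real.log_rpow ha,
    Real.log_mul two_ne_zero hx.ne']
  have hp0 : 0 < p := by linarith
  rw [div_add' _ _ _ hp0.ne', le_div_iff₀ hp0]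
  field_simp
  nlinarith [mul_le_mul_of_nonneg_left hlog (by linarith : (0:ℝ) ≤ p - 1)]

noncomputable def radialFlux (n β : ℝ) (f g : ℝ → ℝ) (x : ℝ) : ℝ :=
  x ^ (n - 1) * deriv g x + β * x ^ n * f x

lemma radialFlux_le_of_deriv_nonpos {n β x : ℝ} {f g : ℝ → ℝ} (hx : 0 ≤ x)
    (hg : deriv g x ≤ 0) : radialFlux n β f g x ≤ β * x ^ n * f x :=
  add_le_of_nonpos_left (mul_nonpos_of_nonneg_of_nonpos (Real.rpow_nonneg hx _) hg)

lemma le_radialFlux_of_deriv_nonneg {n β x : ℝ} {f g : ℝ → ℝ} (hx : 0 ≤ x)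
    (hg : 0 ≤ deriv g x) : β * x ^ n * f x ≤ radialFlux n β f g x :=
  le_add_of_nonneg_left (mul_nonneg (Real.rpow_nonneg hx _) hg)

lemma neg_norm_le_radialFlux {n β x : ℝ} {f g : ℝ → ℝ} (hf : 0 ≤ β * x ^ n * f x) :
    -‖x ^ (n - 1) * deriv g x‖ ≤ radialFlux n β f g x := by
  rw [Real.norm_eq_abs]
  exact (neg_abs_le _).trans (le_add_of_nonneg_right hf)

lemma hasDerivAt_radialFlux {n α β σ p x f' : ℝ} {f g : ℝ → ℝ} (hx : 0 < x)
    (hf : HasDerivAt f f' x) (hg : DifferentiableAt ℝ (deriv g) x)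
    (hode : deriv (deriv g) x + (n - 1) / x * deriv g x - α * f x + β * x * f' + x ^ σ * f x ^ p
      = 0) :
    HasDerivAt (radialFlux n β f g) (x ^ (n - 1) * ((α + β * n) * f x - x ^ σ * f x ^ p)) x := by
  have hpow := fun q : ℝ => Real.hasDerivAt_rpow_const (p := q) (Or.inl hx.ne')
  refine (((hpow (n - 1)).mul hg.hasDerivAt).add (((hpow n).const_mul β).mul hf)).congr_deriv ?_
  have h1 : x ^ (n - 1 - 1) = x ^ (n - 1) / x := by rw [Real.rpow_sub_one hx.ne']
  have h2 : x ^ n = x ^ (n - 1) * x := by rw [← Real.rpow_add_one hx.ne', sub_add_cancel]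
  rw [h1, h2]
  linear_combination x ^ (n - 1) * hode

lemma hasDerivAt_deriv_rpow_const {f : ℝ → ℝ} {x m : ℝ} (hpos : ∀ᶠ y in 𝓝 x, 0 < f y)
    (hf : ∀ᶠ y in 𝓝 x, DifferentiableAt ℝ f y) (hf' : DifferentiableAt ℝ (deriv f) x) :
    HasDerivAt (deriv fun y => f y ^ m)
      (deriv (deriv f) x * m * f x ^ (m - 1) + deriv f x ^ 2 * m * (m - 1) * f x ^ (m - 2)) x := by
  have hpow : HasDerivAt (fun y => f y ^ (m - 1)) (deriv f x * (m - 1) * f x ^ (m - 1 - 1)) x :=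
    hf.self_of_nhds.hasDerivAt.rpow_const (Or.inl hpos.self_of_nhds.ne')
  have heq : (deriv fun y => f y ^ m) =ᶠ[𝓝 x] fun y => deriv f y * m * f y ^ (m - 1) :=
    (hpos.and hf).mono fun y hy => deriv_rpow_const hy.2 (Or.inl hy.1.ne')
  refine HasDerivAt.congr_of_eventuallyEq ?_ heq
  refine ((hf'.hasDerivAt.mul_const m).mul hpow).congr_deriv ?_
  rw [show m - 1 - 1 = m - 2 by ring]
  ring

lemma rpow_mul_sub_rpow_mul_le {t y n σ p A : ℝ} (ht : 0 < t) (hy : 0 < y)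
    (hA : 2 * A ≤ t ^ σ * y ^ (p - 1)) :
    t ^ (n - 1) * (A * y - t ^ σ * y ^ p) ≤ -(t ^ (n + σ - 1) * (y ^ p / 2)) := by
  have htn : t ^ (n + σ - 1) = t ^ (n - 1) * t ^ σ := by
    rw [← Real.rpow_add ht]; ring_nf
  have hyp : y ^ p = y ^ (p - 1) * y := by rw [← Real.rpow_add_one hy.ne', sub_add_cancel]
  rw [htn, hyp]
  have := mul_nonneg (mul_nonneg (Real.rpow_nonneg ht.le (n - 1)) hy.le) (sub_nonneg.2 hA)
  linarith

lemma isLittleO_rpow_mul_deriv_rpow {f : ℝ → ℝ} {m p σ n : ℝ}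
    (hf : ∀ᶠ x in atTop, 0 < f x ∧ DifferentiableAt ℝ f x)
    (hψ : Tendsto (fun x => x ^ (-(σ + 1)) * f x ^ (m - p - 1) * deriv f x) atTop (𝓝 0)) :
    (fun x => x ^ (n - 1) * deriv (fun y => f y ^ m) x) =o[atTop]
      fun x => x ^ (n + σ) * f x ^ p := by
  have hmψ : (fun x => m * (x ^ (-(σ + 1)) * f x ^ (m - p - 1) * deriv f x)) =o[atTop]
      fun _ => (1 : ℝ) := (isLittleO_one_iff ℝ).2 (by simpa using hψ.const_mul m)
  refine ((isBigO_refl (fun x => x ^ (n + σ) * f x ^ p) atTop).mul_isLittleO hmψ).congr' ?_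
    (Eventually.of_forall fun _ => mul_one _)
  filter_upwards [hf, eventually_gt_atTop 0] with x ⟨hfx, hdfx⟩ hx
  have hxpow : x ^ (n + σ) * x ^ (-(σ + 1)) = x ^ (n - 1) := by
    rw [← Real.rpow_add hx]; ring_nf
  have hfpow : f x ^ p * f x ^ (m - p - 1) = f x ^ (m - 1) := by
    rw [← Real.rpow_add hfx]; ring_nf
  rw [deriv_rpow_const hdfx (Or.inl hfx.ne'), ← hxpow, ← hfpow]
  ring

structure IsProfileSolution (m p σ α β : ℝ) (N : ℕ) (R : ℝ) (f : ℝ → ℝ) : Prop where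
  pos : ∀ x ∈ Ioi R, 0 < f x
  differentiableAt : ∀ x ∈ Ioi R, DifferentiableAt ℝ f x
  differentiableAt_deriv : ∀ x ∈ Ioi R, DifferentiableAt ℝ (deriv f) x
  ode : ∀ x ∈ Ioi R, deriv (deriv fun y => f y ^ m) x
    + ((N : ℝ) - 1) / x * deriv (fun y => f y ^ m) x
    - α * f x + β * x * deriv f x + x ^ σ * f x ^ p = 0

namespace IsProfileSolution

variable {m p σ α β R : ℝ} {N : ℕ} {f : ℝ → ℝ}

lemma hasDerivAt_deriv_rpow (hs : IsProfileSolution m p σ α β N R f) {x : ℝ} (hx : R < x) :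
    HasDerivAt (deriv fun y => f y ^ m)
      (deriv (deriv f) x * m * f x ^ (m - 1) + deriv f x ^ 2 * m * (m - 1) * f x ^ (m - 2)) x :=
  hasDerivAt_deriv_rpow_const (eventually_of_mem (Ioi_mem_nhds hx) hs.pos)
    (eventually_of_mem (Ioi_mem_nhds hx) hs.differentiableAt) (hs.differentiableAt_deriv x hx)

lemma deriv_rpow (hs : IsProfileSolution m p σ α β N R f) {x : ℝ} (hx : R < x) :
    deriv (fun y => f y ^ m) x = deriv f x * m * f x ^ (m - 1) :=
  deriv_rpow_const (hs.differentiableAt x hx) (Or.inl (hs.pos x hx).ne')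

lemma hasDerivAt_flux (hs : IsProfileSolution m p σ α β N R f) (hR : 0 < R) {x : ℝ}
    (hx : R < x) :
    HasDerivAt (radialFlux N β f fun y => f y ^ m)
      (x ^ ((N : ℝ) - 1) * ((α + β * N) * f x - x ^ σ * f x ^ p)) x :=
  hasDerivAt_radialFlux (hR.trans hx) (hs.differentiableAt x hx).hasDerivAt
    (hs.hasDerivAt_deriv_rpow hx).differentiableAt (hs.ode x hx)

lemma deriv_deriv_neg_of_deriv_eq_zero (hs : IsProfileSolution m p σ α β N R f) (hm : 0 < m)
    {x : ℝ} (hx : R < x) (hZ : α < x ^ σ * f x ^ (p - 1)) (h0 : deriv f x = 0) :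
    deriv (deriv f) x < 0 := by
  have hfx := hs.pos x hx
  have hode := hs.ode x hx
  have hfp : f x ^ p = f x ^ (p - 1) * f x := by
    rw [← Real.rpow_add_one hfx.ne', sub_add_cancel]
  rw [(hs.hasDerivAt_deriv_rpow hx).deriv, hs.deriv_rpow hx, h0, hfp] at hode
  have hneg : deriv (deriv f) x * (m * f x ^ (m - 1)) < 0 := by
    nlinarith [mul_lt_mul_of_pos_right hZ hfx]
  exact neg_of_mul_neg_left hneg (by positivity)

lemma exists_deriv_neg (hs : IsProfileSolution m p σ α β N R f) (hR : 0 < R) (hN : 1 ≤ N)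
    (hm : 0 < m) (hβ : 0 < β) {a : ℝ} (haR : R < a)
    (hZ : ∀ x ≥ a, 2 * (α + β * N) ≤ x ^ σ * f x ^ (p - 1)) :
    ∃ x ≥ a, deriv f x < 0 := by
  by_contra! hmono
  set H := radialFlux N β f fun y => f y ^ m
  have hfa : 0 < f a := hs.pos a haR
  have hH : AntitoneOn H (Ici a) := by
    refine antitoneOn_of_hasDerivAt_nonpos (convex_Ici a)
      (fun x hx => hs.hasDerivAt_flux hR (haR.trans_le hx)) fun x hx => ?_
    have hx0 : 0 < x := hR.trans (haR.trans_le hx)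
    have hfx := hs.pos x (haR.trans_le hx)
    exact (rpow_mul_sub_rpow_mul_le hx0 hfx (hZ x hx)).trans (neg_nonpos.2 (by positivity))
  have hfmono : MonotoneOn f (Ici a) :=
    monotoneOn_of_hasDerivAt_nonneg (convex_Ici a)
      (fun x hx => (hs.differentiableAt x (haR.trans_le hx)).hasDerivAt) hmono
  have hlow : ∀ x ≥ max a 1, β * f a * x ≤ H x := by
    intro x hx
    have hxa : a ≤ x := (le_max_left _ _).trans hx
    have hx1 : 1 ≤ x := (le_max_right _ _).trans hx
    have hfx := hs.pos x (haR.trans_le hxa)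
    have hg : 0 ≤ deriv (fun y => f y ^ m) x := by
      rw [hs.deriv_rpow (haR.trans_le hxa)]
      exact mul_nonneg (mul_nonneg (hmono x hxa) hm.le) (Real.rpow_nonneg hfx.le _)
    have hxN : x ≤ x ^ (N : ℝ) := by
      simpa using Real.rpow_le_rpow_of_exponent_le hx1 (Nat.one_le_cast.2 hN)
    calc β * f a * x ≤ β * x ^ (N : ℝ) * f x := by
          rw [mul_right_comm]; gcongr; exact hfmono self_mem_Ici hxa hxa
      _ ≤ H x := le_radialFlux_of_deriv_nonneg (by positivity) hg
  have htop : Tendsto H atTop atTop :=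
    tendsto_atTop_mono' atTop (eventually_ge_atTop (max a 1) |>.mono hlow)
      (tendsto_id.const_mul_atTop (by positivity))
  obtain ⟨x, hxa, hx⟩ := ((eventually_ge_atTop a).and (htop.eventually_gt_atTop (H a))).exists
  exact (hH self_mem_Ici hxa hxa).not_gt hx

lemma flux_two_mul_le (hs : IsProfileSolution m p σ α β N R f) (hR : 0 < R) (hp : 0 ≤ p)
    {a : ℝ} (haR : R < a) (hdec : ∀ x ≥ a, deriv f x ≤ 0)
    (hZ : ∀ x ≥ a, 2 * (α + β * N) ≤ x ^ σ * f x ^ (p - 1)) {ξ : ℝ} (hξa : a ≤ ξ) :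
    radialFlux N β f (fun y => f y ^ m) (2 * ξ) ≤ radialFlux N β f (fun y => f y ^ m) ξ
      - min 1 (2 ^ ((N : ℝ) + σ - 1)) * ξ ^ ((N : ℝ) + σ) * (f (2 * ξ) ^ p / 2) := by
  have hξ0 : 0 < ξ := hR.trans (haR.trans_le hξa)
  have hfpos : ∀ x ≥ ξ, 0 < f x := fun x hx => hs.pos x (haR.trans_le (hξa.trans hx))
  have hanti : AntitoneOn f (Ici a) :=
    antitoneOn_of_hasDerivAt_nonpos (convex_Ici a)
      (fun x hx => (hs.differentiableAt x (haR.trans_le hx)).hasDerivAt) hdec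
  have := image_two_mul_le_sub_of_deriv_le_neg_rpow_mul (φ := fun t => f t ^ p / 2) hξ0
    (fun t ht => hs.hasDerivAt_flux hR (haR.trans_le (hξa.trans ht.1)))
    (fun t ht => rpow_mul_sub_rpow_mul_le (hξ0.trans_le ht.1) (hfpos t ht.1)
      (hZ t (hξa.trans ht.1)))
    (fun u hu v hv huv => by
      dsimp only
      gcongr
      · exact (hfpos v hv.1).le
      · exact hanti (hξa.trans hu.1) (hξa.trans hv.1) huv)
    (div_nonneg (Real.rpow_nonneg (hfpos (2 * ξ) (by linarith)).le _) zero_le_two)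
  rwa [sub_add_cancel] at this

lemma exists_rpow_mul_le_of_deriv_nonpos (hs : IsProfileSolution m p σ α β N R f) (hR : 0 < R)
    (hp : 0 ≤ p) (hm : 0 < m) (hβ : 0 < β) {a : ℝ} (haR : R < a) (hdec : ∀ x ≥ a, deriv f x ≤ 0)
    (hZ : ∀ x ≥ a, 2 * (α + β * N) ≤ x ^ σ * f x ^ (p - 1))
    (hψ : Tendsto (fun x => x ^ (-(σ + 1)) * f x ^ (m - p - 1) * deriv f x) atTop (𝓝 0)) :
    ∃ K > 0, ∀ᶠ ξ in atTop, ξ ^ σ * f (2 * ξ) ^ p ≤ K * f ξ := by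
  set H := radialFlux N β f fun y => f y ^ m
  set c := min (1 : ℝ) (2 ^ ((N : ℝ) + σ - 1))
  have hc : 0 < c := lt_min one_pos (Real.rpow_pos_of_pos two_pos _)
  have h2 : (0 : ℝ) < 2 ^ ((N : ℝ) + σ) := Real.rpow_pos_of_pos two_pos _
  refine ⟨4 * β / c, by positivity, ?_⟩
  have hflux := isLittleO_rpow_mul_deriv_rpow (n := N)
    ((eventually_gt_atTop R).mono fun x hx => ⟨hs.pos x hx, hs.differentiableAt x hx⟩) hψ
  -- this tolerance makes the lower bound on `H (2ξ)` cost only half of the drop `H ξ - H (2ξ)`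
  obtain ⟨x₀, hx₀⟩ := eventually_atTop.1 <|
    hflux.bound (show 0 < c / (4 * 2 ^ ((N : ℝ) + σ)) by positivity)
  filter_upwards [eventually_ge_atTop (max a x₀)] with ξ hξ
  have hξa : a ≤ ξ := (le_max_left _ _).trans hξ
  have hξ0 : 0 < ξ := hR.trans (haR.trans_le hξa)
  have hfpos : ∀ x ≥ ξ, 0 < f x := fun x hx => hs.pos x (haR.trans_le (hξa.trans hx))
  have hdrop : H (2 * ξ) ≤ H ξ - c * ξ ^ ((N : ℝ) + σ) * (f (2 * ξ) ^ p / 2) :=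
    hs.flux_two_mul_le hR hp haR hdec hZ hξa
  have hup : H ξ ≤ β * ξ ^ (N : ℝ) * f ξ := by
    refine radialFlux_le_of_deriv_nonpos hξ0.le ?_
    rw [hs.deriv_rpow (haR.trans_le hξa)]
    exact mul_nonpos_of_nonpos_of_nonneg (mul_nonpos_of_nonpos_of_nonneg (hdec ξ hξa) hm.le)
      (Real.rpow_nonneg (hfpos ξ le_rfl).le _)
  have hlow : -(c / 4 * (ξ ^ ((N : ℝ) + σ) * f (2 * ξ) ^ p)) ≤ H (2 * ξ) := by
    have hf2 := hfpos (2 * ξ) (by linarith)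
    refine le_trans ?_ (neg_norm_le_radialFlux (by positivity))
    refine neg_le_neg ((hx₀ (2 * ξ) (by linarith [le_max_right a x₀])).trans_eq ?_)
    rw [Real.norm_of_nonneg (by positivity), Real.mul_rpow zero_le_two hξ0.le]
    field_simp
  have hξN : 0 < ξ ^ (N : ℝ) := by positivity
  rw [Real.rpow_add hξ0] at hdrop hlow
  have hmain : ξ ^ (N : ℝ) * (c / 4 * (ξ ^ σ * f (2 * ξ) ^ p)) ≤ ξ ^ (N : ℝ) * (β * f ξ) := by
    linarith
  rw [div_mul_eq_mul_div, le_div_iff₀ hc]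
  linarith [le_of_mul_le_mul_left hmain hξN]

end IsProfileSolution

theorem no_connection_to_Q4_at_infinity_general (m p σ : ℝ) (N : ℕ)
    (hp1 : 1 < p) (hpm : p < m)
    (hL : 0 < σ * (m - 1) + 2 * (p - 1)) (hN : 1 ≤ N)
    (α β : ℝ)
    (hβ : β = (m - p) / (σ * (m - 1) + 2 * (p - 1))) :
    ¬ ∃ R > (0 : ℝ), ∃ f : ℝ → ℝ,
      (∀ ξ ∈ Set.Ioi R, 0 < f ξ ∧ DifferentiableAt ℝ f ξ ∧
        DifferentiableAt ℝ (deriv f) ξ) ∧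
      ContinuousOn (deriv (deriv f)) (Set.Ioi R) ∧
      (∀ ξ ∈ Set.Ioi R,
        deriv (deriv fun x => f x ^ m) ξ
          + ((N : ℝ) - 1) / ξ * deriv (fun x => f x ^ m) ξ
          - α * f ξ + β * ξ * deriv f ξ + ξ ^ σ * f ξ ^ p = 0) ∧
      Filter.Tendsto (fun ξ : ℝ => ξ ^ σ * f ξ ^ (p - 1)) Filter.atTop Filter.atTop ∧
      Filter.Tendsto (fun ξ : ℝ => ξ ^ (-(σ + 2)) * f ξ ^ (m - p))
        Filter.atTop (nhds 0) ∧
      Filter.Tendsto (fun ξ : ℝ => ξ ^ (-(σ + 1)) * f ξ ^ (m - p - 1) * deriv f ξ)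
        Filter.atTop (nhds 0) := by
  rintro ⟨R, hR, f, hf, -, hode, hZ, -, hψ⟩
  have hs : IsProfileSolution m p σ α β N R f :=
    ⟨fun x hx => (hf x hx).1, fun x hx => (hf x hx).2.1, fun x hx => (hf x hx).2.2, hode⟩
  have hβ0 : 0 < β := hβ ▸ div_pos (by linarith) hL
  have hm : 0 < m := by linarith
  obtain ⟨a, ha⟩ := eventually_atTop.1 <|
    (hZ.eventually_gt_atTop (max (2 * (α + β * N)) α)).and (eventually_gt_atTop R)
  have haR : R < a := (ha a le_rfl).2
  have hZa : ∀ x ≥ a, 2 * (α + β * N) ≤ x ^ σ * f x ^ (p - 1) :=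
    fun x hx => (le_max_left _ _).trans (ha x hx).1.le
  obtain ⟨b, hba, hb⟩ := hs.exists_deriv_neg hR hN hm hβ0 haR hZa
  have hdec : ∀ x ≥ b, deriv f x ≤ 0 :=
    nonpos_of_hasDerivAt_neg_of_eq_zero
      (fun x hx => (hs.differentiableAt_deriv x (haR.trans_le (hba.trans hx))).hasDerivAt)
      (fun x hx => hs.deriv_deriv_neg_of_deriv_eq_zero hm (haR.trans_le (hba.trans hx))
        ((le_max_right _ _).trans_lt (ha x (hba.trans hx)).1))
      hb.le
  obtain ⟨K, hK, hkey⟩ := hs.exists_rpow_mul_le_of_deriv_nonpos hR (by linarith) hm hβ0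
    (haR.trans_le hba) hdec (fun x hx => hZa x (hba.trans hx)) hψ
  refine not_tendsto_atTop_of_eventually_le_div_add
    (C := σ * Real.log 2 + (p - 1) / p * Real.log K) hp1 ?_ (Real.tendsto_log_atTop.comp hZ)
  filter_upwards [hkey, eventually_gt_atTop R] with ξ hξ hξR
  exact log_two_mul_rpow_mul_rpow_le hp1 hK (hR.trans hξR) (hs.pos ξ hξR)
    (hs.pos (2 * ξ) (show R < 2 * ξ by linarith)) hξ

/-- Lemma 3.6, Case 3: no positive C² solution of the self-similar profile ODE on
(R,∞) can satisfy simultaneously ξ^σ f^(p-1) → +∞, ξ^(-(σ+2)) f^(m-p) → 0 and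
ξ^(-(σ+1)) f^(m-p-1) f' → 0 as ξ → ∞. -/
theorem no_connection_to_Q4_at_infinity (m p σ : ℝ) (N : ℕ)
    (hm : 1 < m) (hp1 : 1 < p) (hpm : p < m)
    (hL : 0 < σ * (m - 1) + 2 * (p - 1)) (hN : 1 ≤ N)
    (α β : ℝ)
    (hα : α = (σ + 2) / (σ * (m - 1) + 2 * (p - 1)))
    (hβ : β = (m - p) / (σ * (m - 1) + 2 * (p - 1))) :
    ¬ ∃ R > (0 : ℝ), ∃ f : ℝ → ℝ,
      (∀ ξ ∈ Set.Ioi R, 0 < f ξ ∧ DifferentiableAt ℝ f ξ ∧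
        DifferentiableAt ℝ (deriv f) ξ) ∧
      ContinuousOn (deriv (deriv f)) (Set.Ioi R) ∧
      (∀ ξ ∈ Set.Ioi R,
        deriv (deriv fun x => f x ^ m) ξ
          + ((N : ℝ) - 1) / ξ * deriv (fun x => f x ^ m) ξ
          - α * f ξ + β * ξ * deriv f ξ + ξ ^ σ * f ξ ^ p = 0) ∧
      Filter.Tendsto (fun ξ : ℝ => ξ ^ σ * f ξ ^ (p - 1)) Filter.atTop Filter.atTop ∧
      Filter.Tendsto (fun ξ : ℝ => ξ ^ (-(σ + 2)) * f ξ ^ (m - p))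
        Filter.atTop (nhds 0) ∧
      Filter.Tendsto (fun ξ : ℝ => ξ ^ (-(σ + 1)) * f ξ ^ (m - p - 1) * deriv f ξ)
        Filter.atTop (nhds 0) :=
  no_connection_to_Q4_at_infinity_general m p σ N hp1 hpm hL hN α β hβ
end

section
/- Let m > 1, 1 ≤ p < m, let σ be a real number with σ(m−1) + 2(p−1) > 0, let N ≥ 1 be an integer, and set α = (σ+2)/(σ(m−1)+2(p−1)) and β = (m−p)/(σ(m−1)+2(p−1)). Let R₀ > 0 and let f : (R₀,∞) → (0,∞) be a twice continuously differentiable positive solution of (f^m)''(ξ) + ((N−1)/ξ)(f^m)'(ξ) − α f(ξ) + β ξ f'(ξ) + ξ^σ f(ξ)^p = 0 such that ξ^σ f(ξ)^{p−1} → +∞ as ξ → ∞. Then there exists R > R₀ such that f is monotone on (R,∞) (either nondecreasing on (R,∞) or nonincreasing on (R,∞)). -/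
open Set Filter

/-- Lemma 3.6, Case 3, Step 1: a positive C² solution of the self-similar profile ODE
on (R₀,∞) with ξ^σ f(ξ)^(p-1) → +∞ is eventually monotone. -/
theorem eventual_monotonicity (m p σ : ℝ) (N : ℕ)
    (hm : 1 < m) (hp1 : 1 ≤ p) (hpm : p < m)
    (hL : 0 < σ * (m - 1) + 2 * (p - 1)) (hN : 1 ≤ N)
    (α β : ℝ)
    (hα : α = (σ + 2) / (σ * (m - 1) + 2 * (p - 1)))
    (hβ : β = (m - p) / (σ * (m - 1) + 2 * (p - 1)))
    (R₀ : ℝ) (hR₀ : 0 < R₀) (f : ℝ → ℝ)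
    (hreg : ∀ ξ ∈ Set.Ioi R₀, 0 < f ξ ∧ DifferentiableAt ℝ f ξ ∧
      DifferentiableAt ℝ (deriv f) ξ)
    (hcont : ContinuousOn (deriv (deriv f)) (Set.Ioi R₀))
    (hODE : ∀ ξ ∈ Set.Ioi R₀,
      deriv (deriv fun x => f x ^ m) ξ
        + ((N : ℝ) - 1) / ξ * deriv (fun x => f x ^ m) ξ
        - α * f ξ + β * ξ * deriv f ξ + ξ ^ σ * f ξ ^ p = 0)
    (hlim : Filter.Tendsto (fun ξ : ℝ => ξ ^ σ * f ξ ^ (p - 1))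
      Filter.atTop Filter.atTop) :
    ∃ R > R₀, MonotoneOn f (Set.Ioi R) ∨ AntitoneOn f (Set.Ioi R) := by
  have hfc : ContinuousOn f (Ioi R₀) :=
    fun x hx => ((hreg x hx).2.1).continuousAt.continuousWithinAt
  have hgc : ContinuousOn (deriv f) (Ioi R₀) :=
    fun x hx => ((hreg x hx).2.2).continuousAt.continuousWithinAt
  obtain ⟨a, ha⟩ := eventually_atTop.mp (hlim.eventually_gt_atTop α)
  set R₁ : ℝ := max a (R₀ + 1) with hR₁def
  have hR₁R₀ : R₀ < R₁ := lt_of_lt_of_le (by linarith) (le_max_right _ _)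
  have hIoi : Ioi R₁ ⊆ Ioi R₀ := Ioi_subset_Ioi hR₁R₀.le
  -- Key step: at any critical point beyond R₁ the second derivative is negative.
  have hkey : ∀ ξ ∈ Ioi R₁, deriv f ξ = 0 → deriv (deriv f) ξ < 0 := by
    intro ξ hξ hgξ
    have hξ₀ : ξ ∈ Ioi R₀ := hIoi hξ
    obtain ⟨hfpos, hdf, hddf⟩ := hreg ξ hξ₀
    have hder_fm : ∀ x ∈ Ioi R₀,
        HasDerivAt (fun y => f y ^ m) (m * (f x ^ (m - 1) * deriv f x)) x := by
      intro x hx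
      obtain ⟨hfx, hdx, _⟩ := hreg x hx
      have h := (hdx.hasDerivAt).rpow_const (p := m) (Or.inl hfx.ne')
      convert h using 1; ring
    have heq : EqOn (deriv fun y => f y ^ m)
        (fun x => m * (f x ^ (m - 1) * deriv f x)) (Ioi R₀) :=
      fun x hx => (hder_fm x hx).deriv
    have hEv : (deriv fun y => f y ^ m) =ᶠ[nhds ξ]
        (fun x => m * (f x ^ (m - 1) * deriv f x)) :=
      eventually_of_mem (isOpen_Ioi.mem_nhds hξ₀) heq
    have h2 : deriv (deriv fun y => f y ^ m) ξ
        = deriv (fun x => m * (f x ^ (m - 1) * deriv f x)) ξ := hEv.deriv_eq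
    have hfm1 : HasDerivAt (fun x => f x ^ (m - 1))
        (deriv f ξ * (m - 1) * f ξ ^ (m - 1 - 1)) ξ :=
      (hdf.hasDerivAt).rpow_const (Or.inl hfpos.ne')
    have hgd : HasDerivAt (deriv f) (deriv (deriv f) ξ) ξ := hddf.hasDerivAt
    have hprod : HasDerivAt (fun x => m * (f x ^ (m - 1) * deriv f x))
        (m * ((deriv f ξ * (m - 1) * f ξ ^ (m - 1 - 1)) * deriv f ξ
          + f ξ ^ (m - 1) * deriv (deriv f) ξ)) ξ := (hfm1.mul hgd).const_mul m
    have h3 : deriv (fun x => m * (f x ^ (m - 1) * deriv f x)) ξ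
        = m * (f ξ ^ (m - 1) * deriv (deriv f) ξ) := by
      rw [hprod.deriv, hgξ]; ring
    have h4 : deriv (fun x => f x ^ m) ξ = 0 := by
      rw [heq hξ₀]; simp [hgξ]
    have hODEξ := hODE ξ hξ₀
    rw [h2, h3, h4, hgξ] at hODEξ
    have hfp : f ξ ^ p = f ξ * f ξ ^ (p - 1) := by
      have h := Real.rpow_add hfpos 1 (p - 1)
      rw [Real.rpow_one] at h
      rw [show (1:ℝ) + (p - 1) = p by ring] at h
      exact h
    have hα' : α < ξ ^ σ * f ξ ^ (p - 1) :=
      ha ξ (le_trans (le_max_left _ _) (le_of_lt hξ))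
    have hpow : 0 < f ξ ^ (m - 1) := Real.rpow_pos_of_pos hfpos _
    rw [hfp] at hODEξ
    by_contra hcon
    push_neg at hcon
    nlinarith [mul_pos hfpos (sub_pos.mpr hα'),
      mul_nonneg (mul_nonneg (by linarith : (0:ℝ) ≤ m) hpow.le) hcon]
  -- There cannot be two distinct critical points beyond R₁.
  have hno2 : ∀ ξ₁ ξ₂ : ℝ, R₁ < ξ₁ → ξ₁ < ξ₂ → deriv f ξ₁ = 0 → deriv f ξ₂ = 0 → False := by
    intro ξ₁ ξ₂ h1 h12 hz1 hz2
    have h1' : ξ₁ ∈ Ioi R₁ := h1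
    have hd1 := hkey ξ₁ h1' hz1
    have hder1 : HasDerivAt (deriv f) (deriv (deriv f) ξ₁) ξ₁ :=
      ((hreg ξ₁ (hIoi h1')).2.2).hasDerivAt
    have hslope1 := (hasDerivAt_iff_tendsto_slope.mp hder1).eventually_lt_const hd1
    have hleft1 : ∀ᶠ x in nhdsWithin ξ₁ (Ioi ξ₁), slope (deriv f) ξ₁ x < 0 :=
      hslope1.filter_mono (nhdsWithin_mono _ (fun x hx => ne_of_gt hx))
    obtain ⟨t, hts, htmem⟩ :=
      (hleft1.and (eventually_of_mem (Ioo_mem_nhdsGT_of_mem ⟨le_refl ξ₁, h12⟩)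
        (fun x hx => hx))).exists
    rw [slope_def_field, hz1] at hts
    have hgt : deriv f t < 0 := by
      have htpos : 0 < t - ξ₁ := sub_pos.mpr htmem.1
      have := hts
      rw [div_neg_iff] at this
      rcases this with ⟨h, _⟩ | ⟨_, h⟩
      · linarith
      · linarith
    -- first zero of deriv f after t
    set S : Set ℝ := Icc t ξ₂ ∩ (deriv f) ⁻¹' {0} with hSdef
    have hsub : Icc t ξ₂ ⊆ Ioi R₀ := fun x hx =>
      lt_trans hR₁R₀ (lt_of_lt_of_le (h1.trans htmem.1) hx.1)
    have hSclosed : IsClosed S :=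
      (hgc.mono hsub).preimage_isClosed_of_isClosed isClosed_Icc isClosed_singleton
    have hSne : S.Nonempty := ⟨ξ₂, ⟨htmem.2.le, le_refl _⟩, hz2⟩
    have hSbdd : BddBelow S := ⟨t, fun x hx => hx.1.1⟩
    set c : ℝ := sInf S with hcdef
    have hcS : c ∈ S := hSclosed.csInf_mem hSne hSbdd
    have hgc0 : deriv f c = 0 := hcS.2
    have htc : t < c := by
      rcases lt_or_eq_of_le hcS.1.1 with h | h
      · exact h
      · exact absurd hgc0 (by rw [← h]; exact ne_of_lt hgt)
    have hcR₁ : c ∈ Ioi R₁ := h1.trans (htmem.1.trans htc)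
    have hdc := hkey c hcR₁ hgc0
    have hneg : ∀ x ∈ Ico t c, deriv f x < 0 := by
      intro x hx
      by_contra hge
      push_neg at hge
      rcases eq_or_lt_of_le hge with heq0 | hpos
      · exact absurd (csInf_le hSbdd ⟨⟨hx.1, hx.2.le.trans hcS.1.2⟩, heq0.symm⟩)
          (not_le.mpr hx.2)
      · have hcont' : ContinuousOn (deriv f) (Icc t x) :=
          hgc.mono (fun y hy => hsub ⟨hy.1, hy.2.trans (hx.2.le.trans hcS.1.2)⟩)
        have h0mem : (0:ℝ) ∈ Icc (deriv f t) (deriv f x) := ⟨hgt.le, hpos.le⟩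
        obtain ⟨z, hz, hz0⟩ := intermediate_value_Icc hx.1 hcont' h0mem
        have : c ≤ z := csInf_le hSbdd ⟨⟨hz.1, hz.2.trans (hx.2.le.trans hcS.1.2)⟩, hz0⟩
        linarith [hz.2, hx.2]
    have hderc : HasDerivAt (deriv f) (deriv (deriv f) c) c :=
      ((hreg c (hIoi hcR₁)).2.2).hasDerivAt
    have hslopec := (hasDerivAt_iff_tendsto_slope.mp hderc).eventually_lt_const hdc
    have hleftc : ∀ᶠ x in nhdsWithin c (Iio c), slope (deriv f) c x < 0 :=
      hslopec.filter_mono (nhdsWithin_mono _ (fun x hx => ne_of_lt hx))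
    obtain ⟨x, hx1, hx2⟩ :=
      (hleftc.and (eventually_of_mem (Ioo_mem_nhdsLT_of_mem ⟨htc, le_refl c⟩)
        (fun x hx => hx))).exists
    rw [slope_def_field, hgc0] at hx1
    have hxneg : x - c < 0 := sub_neg.mpr hx2.2
    have hgxpos : 0 < deriv f x := by
      rw [div_neg_iff] at hx1
      rcases hx1 with ⟨h, h'⟩ | ⟨h, _⟩
      · linarith
      · linarith
    exact absurd (hneg x ⟨hx2.1.le, hx2.2⟩) (not_lt.mpr hgxpos.le)
  -- From no sign change, conclude monotonicity
  have hfinal : ∀ R : ℝ, R₀ < R → (∀ x ∈ Ioi R, deriv f x ≠ 0) →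
      MonotoneOn f (Ioi R) ∨ AntitoneOn f (Ioi R) := by
    intro R hR hnz
    have hsub : Ioi R ⊆ Ioi R₀ := Ioi_subset_Ioi hR.le
    have hcf : ContinuousOn f (Ioi R) := hfc.mono hsub
    have hsign : (∀ x ∈ Ioi R, 0 < deriv f x) ∨ (∀ x ∈ Ioi R, deriv f x < 0) := by
      by_contra hc
      push_neg at hc
      obtain ⟨⟨x, hx, hx0⟩, ⟨y, hy, hy0⟩⟩ := hc
      have hgx : deriv f x < 0 := lt_of_le_of_ne hx0 (hnz x hx)
      have hgy : 0 < deriv f y := lt_of_le_of_ne hy0 (Ne.symm (hnz y hy))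
      have huIcc : uIcc x y ⊆ Ioi R := by
        intro z hz
        exact lt_of_lt_of_le (lt_min hx hy) hz.1
      have hcg : ContinuousOn (deriv f) (uIcc x y) := hgc.mono (huIcc.trans hsub)
      have h0mem : (0:ℝ) ∈ uIcc (deriv f x) (deriv f y) :=
        Set.mem_uIcc.mpr (Or.inl ⟨hgx.le, hgy.le⟩)
      obtain ⟨z, hz, hz0⟩ := intermediate_value_uIcc hcg h0mem
      exact hnz z (huIcc hz) hz0
    rcases hsign with hpos | hneg
    · left
      exact (strictMonoOn_of_deriv_pos (convex_Ioi R) hcf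
        (by intro x hx; rw [interior_Ioi] at hx; exact hpos x hx)).monotoneOn
    · right
      exact (strictAntiOn_of_deriv_neg (convex_Ioi R) hcf
        (by intro x hx; rw [interior_Ioi] at hx; exact hneg x hx)).antitoneOn
  by_cases hz : ∃ ξ ∈ Ioi R₁, deriv f ξ = 0
  · obtain ⟨ξs, hξs, hzξ⟩ := hz
    refine ⟨ξs, lt_trans hR₁R₀ hξs, ?_⟩
    refine hfinal ξs (lt_trans hR₁R₀ hξs) ?_
    intro x hx h0
    exact hno2 ξs x hξs hx hzξ h0
  · push_neg at hz
    exact ⟨R₁, hR₁R₀, hfinal R₁ hR₁R₀ hz⟩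
end

section
/- Let m > 1, 1 ≤ p < m, let σ be a real number with σ(m−1) + 2(p−1) > 0, let N ≥ 1 be an integer, and set α = (σ+2)/(σ(m−1)+2(p−1)) and β = (m−p)/(σ(m−1)+2(p−1)). Then there is no R > 0 and no twice continuously differentiable positive nondecreasing function f : (R,∞) → (0,∞) that solves (f^m)''(ξ) + ((N−1)/ξ)(f^m)'(ξ) − α f(ξ) + β ξ f'(ξ) + ξ^σ f(ξ)^p = 0 on (R,∞) and satisfies ξ^σ f(ξ)^{p−1} → +∞ as ξ → ∞. -/
/-!
Write `g = f ^ m`. Since `f` and `g` are nondecreasing and `β ≥ 0`, the radial and drift terms of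
the equation are nonnegative, so on a half-line `[a, ∞)` where `ξ ^ σ * f ξ ^ (p - 1) ≥ α + 1` it
forces `g'' ≤ α f - ξ ^ σ f ^ p ≤ -f ≤ -f a`. Then `g'` decreases at least linearly and eventually
becomes negative, contradicting the monotonicity of `g`.
-/

open Set

lemma MonotoneOn.deriv_nonneg_of_isOpen {f : ℝ → ℝ} {s : Set ℝ} {x : ℝ} (hf : MonotoneOn f s)
    (hs : IsOpen s) (hx : x ∈ s) : 0 ≤ deriv f x := by
  rw [← derivWithin_of_isOpen hs hx]
  exact hf.derivWithin_nonneg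

lemma MonotoneOn.rpow_const_of_pos {f : ℝ → ℝ} {s : Set ℝ} {m : ℝ} (hf : MonotoneOn f s)
    (hpos : ∀ x ∈ s, 0 < f x) (hm : 0 ≤ m) : MonotoneOn (fun x => f x ^ m) s :=
  fun _ hx _ hy hxy => Real.rpow_le_rpow (hpos _ hx).le (hf hx hy hxy) hm

lemma differentiableAt_deriv_rpow_const {f : ℝ → ℝ} {s : Set ℝ} {x : ℝ} (m : ℝ) (hs : IsOpen s)
    (hpos : ∀ y ∈ s, 0 < f y) (hf : ∀ y ∈ s, DifferentiableAt ℝ f y) (hx : x ∈ s)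
    (hf' : DifferentiableAt ℝ (deriv f) x) :
    DifferentiableAt ℝ (deriv fun y => f y ^ m) x := by
  have hderiv : deriv (fun y => f y ^ m) =ᶠ[nhds x] fun y => deriv f y * m * f y ^ (m - 1) := by
    filter_upwards [hs.mem_nhds hx] with y hy
    exact ((hf y hy).hasDerivAt.rpow_const (Or.inl (hpos y hy).ne')).deriv
  exact hderiv.differentiableAt_iff.mpr
    ((hf'.mul_const m).mul ((hf x hx).rpow_const (Or.inl (hpos x hx).ne')))

lemma exists_lt_zero_of_deriv_le_neg {u : ℝ → ℝ} {a c : ℝ} (hc : 0 < c)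
    (hu : ∀ x ∈ Ici a, DifferentiableAt ℝ u x) (hu' : ∀ x ∈ Ici a, deriv u x ≤ -c) :
    ∃ x ∈ Ici a, u x < 0 := by
  set b := a + (|u a| + 1) / c
  have hab : a ≤ b := le_add_of_nonneg_right (by positivity)
  have hdecay : u b - u a ≤ -c * (b - a) :=
    (convex_Ici a).image_sub_le_mul_sub_of_deriv_le
      (fun x hx => (hu x hx).continuousAt.continuousWithinAt)
      (fun x hx => (hu x (interior_subset hx)).differentiableWithinAt)
      (fun x hx => hu' x (interior_subset hx)) a self_mem_Ici b hab hab
  have hcb : c * (b - a) = |u a| + 1 := by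
    simp only [b, add_sub_cancel_left]
    field_simp
  refine ⟨b, hab, ?_⟩
  linarith [le_abs_self (u a)]

/-- `A, B, F, D` stand for `(f ^ m)''`, `(f ^ m)'`, `f`, `f'` at `ξ`. -/
lemma profile_second_deriv_le_neg {N : ℕ} {p σ α β ξ A B F D : ℝ} (hN : 1 ≤ N) (hβ : 0 ≤ β)
    (hξ : 0 < ξ) (hF : 0 < F) (hB : 0 ≤ B) (hD : 0 ≤ D)
    (hreact : α + 1 ≤ ξ ^ σ * F ^ (p - 1))
    (hode : A + ((N : ℝ) - 1) / ξ * B - α * F + β * ξ * D + ξ ^ σ * F ^ p = 0) :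
    A ≤ -F := by
  have hsplit : ξ ^ σ * F ^ p = ξ ^ σ * F ^ (p - 1) * F := by
    rw [Real.rpow_sub_one hF.ne', mul_assoc, div_mul_cancel₀ _ hF.ne']
  have hradial : 0 ≤ ((N : ℝ) - 1) / ξ * B :=
    mul_nonneg (div_nonneg (sub_nonneg.mpr (by exact_mod_cast hN)) hξ.le) hB
  have hdrift : 0 ≤ β * ξ * D := by positivity
  nlinarith [mul_le_mul_of_nonneg_right hreact hF.le]

theorem no_increasing_unbounded_reaction_solution_general (m p σ : ℝ) (N : ℕ)
    (hm : 1 < m) (hpm : p < m)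
    (hL : 0 < σ * (m - 1) + 2 * (p - 1)) (hN : 1 ≤ N)
    (α β : ℝ)
    (hβ : β = (m - p) / (σ * (m - 1) + 2 * (p - 1))) :
    ¬ ∃ R > (0 : ℝ), ∃ f : ℝ → ℝ,
      (∀ ξ ∈ Set.Ioi R, 0 < f ξ ∧ DifferentiableAt ℝ f ξ ∧
        DifferentiableAt ℝ (deriv f) ξ) ∧
      ContinuousOn (deriv (deriv f)) (Set.Ioi R) ∧
      MonotoneOn f (Set.Ioi R) ∧
      (∀ ξ ∈ Set.Ioi R,
        deriv (deriv fun x => f x ^ m) ξ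
          + ((N : ℝ) - 1) / ξ * deriv (fun x => f x ^ m) ξ
          - α * f ξ + β * ξ * deriv f ξ + ξ ^ σ * f ξ ^ p = 0) ∧
      Filter.Tendsto (fun ξ : ℝ => ξ ^ σ * f ξ ^ (p - 1))
        Filter.atTop Filter.atTop := by
  rintro ⟨R, hR, f, hreg, -, hmono, hode, hlim⟩
  set g := fun x => f x ^ m
  have hβ0 : 0 ≤ β := hβ ▸ div_nonneg (by linarith) hL.le
  have hgmono : MonotoneOn g (Ioi R) :=
    hmono.rpow_const_of_pos (fun x hx => (hreg x hx).1) (by linarith)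
  obtain ⟨M, hM⟩ := (hlim.eventually_ge_atTop (α + 1)).exists_forall_of_atTop
  set a := max M (R + 1)
  have haR : Ici a ⊆ Ioi R := fun x hx => (lt_add_one R).trans_le ((le_max_right _ _).trans hx)
  have hg'_diff : ∀ x ∈ Ici a, DifferentiableAt ℝ (deriv g) x := fun x hx =>
    differentiableAt_deriv_rpow_const m isOpen_Ioi (fun y hy => (hreg y hy).1)
      (fun y hy => (hreg y hy).2.1) (haR hx) (hreg x (haR hx)).2.2
  have hg''_le : ∀ x ∈ Ici a, deriv (deriv g) x ≤ -f a := fun x hx =>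
    calc deriv (deriv g) x ≤ -f x :=
          profile_second_deriv_le_neg hN hβ0 (hR.trans (haR hx)) (hreg x (haR hx)).1
            (hgmono.deriv_nonneg_of_isOpen isOpen_Ioi (haR hx))
            (hmono.deriv_nonneg_of_isOpen isOpen_Ioi (haR hx))
            (hM x ((le_max_left _ _).trans hx)) (hode x (haR hx))
      _ ≤ -f a := neg_le_neg (hmono (haR self_mem_Ici) (haR hx) hx)
  obtain ⟨x, hx, hneg⟩ :=
    exists_lt_zero_of_deriv_le_neg (hreg a (haR self_mem_Ici)).1 hg'_diff hg''_le
  exact hneg.not_ge (hgmono.deriv_nonneg_of_isOpen isOpen_Ioi (haR hx))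

/-- Lemma 3.6, Case 3, Step 3: no positive nondecreasing C² solution of the
self-similar profile ODE on (R,∞) can satisfy ξ^σ f(ξ)^(p-1) → +∞ as ξ → ∞. -/
theorem no_increasing_unbounded_reaction_solution (m p σ : ℝ) (N : ℕ)
    (hm : 1 < m) (hp1 : 1 ≤ p) (hpm : p < m)
    (hL : 0 < σ * (m - 1) + 2 * (p - 1)) (hN : 1 ≤ N)
    (α β : ℝ)
    (hα : α = (σ + 2) / (σ * (m - 1) + 2 * (p - 1)))
    (hβ : β = (m - p) / (σ * (m - 1) + 2 * (p - 1))) :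
    ¬ ∃ R > (0 : ℝ), ∃ f : ℝ → ℝ,
      (∀ ξ ∈ Set.Ioi R, 0 < f ξ ∧ DifferentiableAt ℝ f ξ ∧
        DifferentiableAt ℝ (deriv f) ξ) ∧
      ContinuousOn (deriv (deriv f)) (Set.Ioi R) ∧
      MonotoneOn f (Set.Ioi R) ∧
      (∀ ξ ∈ Set.Ioi R,
        deriv (deriv fun x => f x ^ m) ξ
          + ((N : ℝ) - 1) / ξ * deriv (fun x => f x ^ m) ξ
          - α * f ξ + β * ξ * deriv f ξ + ξ ^ σ * f ξ ^ p = 0) ∧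
      Filter.Tendsto (fun ξ : ℝ => ξ ^ σ * f ξ ^ (p - 1))
        Filter.atTop Filter.atTop :=
  no_increasing_unbounded_reaction_solution_general m p σ N hm hpm hL hN α β hβ
end

section
/- Let m > 1, 1 ≤ p < m, let σ be a real number with σ(m−1) + 2(p−1) > 0, let N ≥ 1 be an integer, and set α = (σ+2)/(σ(m−1)+2(p−1)), β = (m−p)/(σ(m−1)+2(p−1)), X₂ = (m−1)/(2α(mN−N+2)), Y₂ = 1/(α(mN−N+2)). Let T ∈ (0,∞], and let (X,Y,Z) : [0,T) → ℝ³ be differentiable and satisfy X' = X((m−1)Y − 2X), Y' = −Y² − (β/α)Y + X − N X Y − X Z, Z' = Z((p−1)Y + σX) on [0,T), with X(t) ≥ 0 and Z(t) ≥ 0 for all t ∈ [0,T). If X(0) < X₂ and Y(0) < Y₂, then X(t) < X₂ and Y(t) < Y₂ for all t ∈ [0,T). -/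
/-!
Inside the region, comparing the field with its value `0` at the critical point `P₂` gives
`X' ≤ 2 X₂ (X₂ - X)` (as `X ≥ 0`) and `Y' ≤ (2 Y₂ + β/α + N X₂) (Y₂ - Y)` (as `X, Z ≥ 0` and
`N Y₂ ≤ 1`). By Grönwall, `X₂ - X` and `Y₂ - Y` then stay positive up to the first exit time,
so the trajectory never leaves.
-/

open Set Topology Real

theorem neg_of_deriv_right_le_mul {f f' : ℝ → ℝ} {a b K : ℝ} (hab : a ≤ b)
    (hf : ContinuousOn f (Icc a b)) (hf' : ∀ x ∈ Ico a b, HasDerivWithinAt f (f' x) (Ici x) x)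
    (bound : ∀ x ∈ Ico a b, f' x ≤ K * f x) (ha : f a < 0) : f b < 0 := by
  have hb := le_gronwallBound_of_liminf_deriv_right_le hf
    (fun x hx _ hr => (hf' x hx).liminf_right_slope_le hr) le_rfl
    (fun x hx => (bound x hx).trans_eq (add_zero _).symm) b ⟨hab, le_rfl⟩
  rw [gronwallBound_ε0] at hb
  exact hb.trans_lt (mul_neg_of_neg_of_pos ha (exp_pos _))

theorem neg_and_neg_of_deriv_right_le_mul {f g f' g' : ℝ → ℝ} {a b K L : ℝ} (hab : a ≤ b)
    (hf : ContinuousOn f (Icc a b)) (hg : ContinuousOn g (Icc a b))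
    (hf' : ∀ x ∈ Ico a b, HasDerivWithinAt f (f' x) (Ici x) x)
    (hg' : ∀ x ∈ Ico a b, HasDerivWithinAt g (g' x) (Ici x) x)
    (bound : ∀ x ∈ Ico a b, f x < 0 → g x < 0 → f' x ≤ K * f x ∧ g' x ≤ L * g x)
    (hfa : f a < 0) (hga : g a < 0) : f b < 0 ∧ g b < 0 := by
  by_contra hb
  set S := Icc a b ∩ f ⁻¹' Ici 0 ∪ Icc a b ∩ g ⁻¹' Ici 0
  have hS : IsClosed S :=
    (hf.preimage_isClosed_of_isClosed isClosed_Icc isClosed_Ici).union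
      (hg.preimage_isClosed_of_isClosed isClosed_Icc isClosed_Ici)
  have hmemS : ∀ x ∈ Icc a b, ¬(f x < 0 ∧ g x < 0) → x ∈ S := by
    intro x hx hx'
    by_cases hfx : f x < 0
    · exact Or.inr ⟨hx, not_lt.1 fun hgx => hx' ⟨hfx, hgx⟩⟩
    · exact Or.inl ⟨hx, not_lt.1 hfx⟩
  have hbS : b ∈ S := hmemS b ⟨hab, le_rfl⟩ hb
  have hSa : ∀ x ∈ S, a ≤ x := by rintro x (⟨hx, -⟩ | ⟨hx, -⟩) <;> exact hx.1
  set t₀ := sInf S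
  have ht₀ : t₀ ∈ S := hS.csInf_mem ⟨b, hbS⟩ ⟨a, hSa⟩
  have ht₀b : t₀ ≤ b := csInf_le ⟨a, hSa⟩ hbS
  have hbefore : ∀ x ∈ Ico a t₀, f x < 0 ∧ g x < 0 := by
    intro x hx
    by_contra hx'
    exact (csInf_le ⟨a, hSa⟩ (hmemS x ⟨hx.1, hx.2.le.trans ht₀b⟩ hx')).not_gt hx.2
  have hsub : Ico a t₀ ⊆ Ico a b := Ico_subset_Ico_right ht₀b
  have hf₀ : f t₀ < 0 :=
    neg_of_deriv_right_le_mul (hSa t₀ ht₀) (hf.mono (Icc_subset_Icc_right ht₀b))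
      (fun x hx => hf' x (hsub hx))
      (fun x hx => (bound x (hsub hx) (hbefore x hx).1 (hbefore x hx).2).1) hfa
  have hg₀ : g t₀ < 0 :=
    neg_of_deriv_right_le_mul (hSa t₀ ht₀) (hg.mono (Icc_subset_Icc_right ht₀b))
      (fun x hx => hg' x (hsub hx))
      (fun x hx => (bound x (hsub hx) (hbefore x hx).1 (hbefore x hx).2).2) hga
  rcases ht₀ with ⟨-, h⟩ | ⟨-, h⟩
  · exact (not_le.2 hf₀) h
  · exact (not_le.2 hg₀) h

section Domain

variable {T : EReal} {F F' : ℝ → ℝ}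

theorem Icc_subset_setOf_nonneg_lt {t : ℝ} (ht : (t : EReal) < T) :
    Icc 0 t ⊆ {s : ℝ | 0 ≤ s ∧ (s : EReal) < T} :=
  fun _ hs => ⟨hs.1, (EReal.coe_le_coe_iff.2 hs.2).trans_lt ht⟩

theorem setOf_nonneg_lt_mem_nhdsGE {t : ℝ} (ht0 : 0 ≤ t) (ht : (t : EReal) < T) :
    {s : ℝ | 0 ≤ s ∧ (s : EReal) < T} ∈ 𝓝[≥] t := by
  have hopen : IsOpen {s : ℝ | (s : EReal) < T} :=
    isOpen_lt continuous_coe_real_ereal continuous_const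
  filter_upwards [self_mem_nhdsWithin, nhdsWithin_le_nhds (hopen.mem_nhds ht)] with s hs hsT
  exact ⟨ht0.trans hs, hsT⟩

theorem continuousOn_Icc_of_hasDerivWithinAt_setOf_nonneg_lt
    (hF : ∀ t : ℝ, 0 ≤ t → (t : EReal) < T →
      HasDerivWithinAt F (F' t) {s : ℝ | 0 ≤ s ∧ (s : EReal) < T} t)
    {t : ℝ} (ht : (t : EReal) < T) :
    ContinuousOn F (Icc 0 t) := fun s hs =>
  let hsD := Icc_subset_setOf_nonneg_lt ht hs
  (hF s hsD.1 hsD.2).continuousWithinAt.mono (Icc_subset_setOf_nonneg_lt ht)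

theorem hasDerivWithinAt_Ici_of_hasDerivWithinAt_setOf_nonneg_lt
    (hF : ∀ t : ℝ, 0 ≤ t → (t : EReal) < T →
      HasDerivWithinAt F (F' t) {s : ℝ | 0 ≤ s ∧ (s : EReal) < T} t)
    {t : ℝ} (ht : (t : EReal) < T) :
    ∀ s ∈ Ico 0 t, HasDerivWithinAt F (F' s) (Ici s) s := fun s hs =>
  let hsD := Icc_subset_setOf_nonneg_lt ht (Ico_subset_Icc_self hs)
  (hF s hsD.1 hsD.2).mono_of_mem_nhdsWithin (setOf_nonneg_lt_mem_nhdsGE hsD.1 hsD.2)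

end Domain

theorem alpha_beta_relation {m p σ : ℝ} (hL : σ * (m - 1) + 2 * (p - 1) ≠ 0) :
    (m - 1) * ((σ + 2) / (σ * (m - 1) + 2 * (p - 1)))
      - 2 * ((m - p) / (σ * (m - 1) + 2 * (p - 1))) = 1 := by
  rw [mul_div_assoc', mul_div_assoc', div_sub_div_same, div_eq_one_iff_eq hL]
  ring

section CriticalPoint

variable {m n α β X₂ Y₂ : ℝ}

theorem sub_one_mul_Y₂ (hX₂ : X₂ = (m - 1) / (2 * α * (m * n - n + 2)))
    (hY₂ : Y₂ = 1 / (α * (m * n - n + 2))) : (m - 1) * Y₂ = 2 * X₂ := by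
  simp only [hX₂, hY₂, div_eq_mul_inv, mul_inv]
  ring

theorem alpha_pos (hm : 1 < m) (hβ : 0 ≤ β) (hαβ : (m - 1) * α - 2 * β = 1) : 0 < α := by
  nlinarith

theorem n_le_alpha_mul (hm : 1 < m) (hβ : 0 ≤ β) (hαβ : (m - 1) * α - 2 * β = 1) (hn : 0 ≤ n) :
    n ≤ α * (m * n - n + 2) := by
  nlinarith [alpha_pos hm hβ hαβ]

theorem n_mul_Y₂_le_one (hm : 1 < m) (hβ : 0 ≤ β) (hαβ : (m - 1) * α - 2 * β = 1) (hn : 0 ≤ n)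
    (hY₂ : Y₂ = 1 / (α * (m * n - n + 2))) : n * Y₂ ≤ 1 := by
  rw [hY₂, mul_one_div, div_le_one (by nlinarith [alpha_pos hm hβ hαβ])]
  exact n_le_alpha_mul hm hβ hαβ hn

theorem P₂_isCritical (hm : 1 < m) (hβ : 0 ≤ β) (hαβ : (m - 1) * α - 2 * β = 1) (hn : 0 ≤ n)
    (hX₂ : X₂ = (m - 1) / (2 * α * (m * n - n + 2))) (hY₂ : Y₂ = 1 / (α * (m * n - n + 2))) :
    -Y₂ ^ 2 - β / α * Y₂ + X₂ - n * X₂ * Y₂ = 0 := by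
  have hα : α ≠ 0 := (alpha_pos hm hβ hαβ).ne'
  have hK : n * (m - 1) + 2 ≠ 0 := by nlinarith
  rw [hX₂, hY₂]
  field_simp
  linear_combination (m * n - n + 2) * hαβ

end CriticalPoint

theorem xField_le {m X₂ Y₂ x y : ℝ} (hm : 1 ≤ m) (hP₂ : (m - 1) * Y₂ = 2 * X₂) (hx : 0 ≤ x)
    (hy : y ≤ Y₂) : x * ((m - 1) * y - 2 * x) ≤ -(2 * X₂) * (x - X₂) := by
  nlinarith [mul_nonneg (mul_nonneg hx (sub_nonneg.2 hm)) (sub_nonneg.2 hy), sq_nonneg (X₂ - x)]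

theorem yField_le {n b X₂ Y₂ x y z : ℝ} (hP₂ : -Y₂ ^ 2 - b * Y₂ + X₂ - n * X₂ * Y₂ = 0)
    (hn : 0 ≤ n) (hnY₂ : n * Y₂ ≤ 1) (hx : 0 ≤ x) (hxX₂ : x ≤ X₂) (hy : y ≤ Y₂) (hz : 0 ≤ z) :
    -y ^ 2 - b * y + x - n * x * y - x * z ≤ -(2 * Y₂ + b + n * X₂) * (y - Y₂) := by
  nlinarith [mul_nonneg (sub_nonneg.2 hxX₂) (sub_nonneg.2 hnY₂),
    mul_nonneg (mul_nonneg hn (sub_nonneg.2 hxX₂)) (sub_nonneg.2 hy), mul_nonneg hx hz,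
    sq_nonneg (Y₂ - y)]

theorem region_below_P2_invariant_general (m p σ : ℝ) (N : ℕ)
    (hm : 1 < m) (hpm : p < m)
    (hL : 0 < σ * (m - 1) + 2 * (p - 1))
    (α β X₂ Y₂ : ℝ)
    (hα : α = (σ + 2) / (σ * (m - 1) + 2 * (p - 1)))
    (hβ : β = (m - p) / (σ * (m - 1) + 2 * (p - 1)))
    (hX₂ : X₂ = (m - 1) / (2 * α * (m * (N : ℝ) - (N : ℝ) + 2)))
    (hY₂ : Y₂ = 1 / (α * (m * (N : ℝ) - (N : ℝ) + 2)))
    (T : EReal)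
    (X Y Z : ℝ → ℝ)
    (hX : ∀ t : ℝ, 0 ≤ t → (t : EReal) < T →
      HasDerivWithinAt X (X t * ((m - 1) * Y t - 2 * X t))
        {s : ℝ | 0 ≤ s ∧ (s : EReal) < T} t)
    (hY : ∀ t : ℝ, 0 ≤ t → (t : EReal) < T →
      HasDerivWithinAt Y
        (-(Y t) ^ 2 - (β / α) * Y t + X t - (N : ℝ) * X t * Y t - X t * Z t)
        {s : ℝ | 0 ≤ s ∧ (s : EReal) < T} t)
    (hXnn : ∀ t : ℝ, 0 ≤ t → (t : EReal) < T → 0 ≤ X t)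
    (hZnn : ∀ t : ℝ, 0 ≤ t → (t : EReal) < T → 0 ≤ Z t)
    (hX0 : X 0 < X₂) (hY0 : Y 0 < Y₂) :
    ∀ t : ℝ, 0 ≤ t → (t : EReal) < T → X t < X₂ ∧ Y t < Y₂ := by
  intro t ht0 htT
  have hαβ : (m - 1) * α - 2 * β = 1 := hα ▸ hβ ▸ alpha_beta_relation hL.ne'
  have hβ0 : 0 ≤ β := hβ ▸ div_nonneg (sub_nonneg.2 hpm.le) hL.le
  have hN : (0 : ℝ) ≤ N := N.cast_nonneg
  have hXY₂ := sub_one_mul_Y₂ hX₂ hY₂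
  have hP₂ := P₂_isCritical hm hβ0 hαβ hN hX₂ hY₂
  have hNY₂ := n_mul_Y₂_le_one hm hβ0 hαβ hN hY₂
  have hdomain : ∀ s ∈ Ico 0 t, 0 ≤ s ∧ (s : EReal) < T := fun s hs =>
    Icc_subset_setOf_nonneg_lt htT (Ico_subset_Icc_self hs)
  have key := neg_and_neg_of_deriv_right_le_mul (f := fun s => X s - X₂)
    (g := fun s => Y s - Y₂) (K := -(2 * X₂)) (L := -(2 * Y₂ + β / α + N * X₂)) ht0
    ((continuousOn_Icc_of_hasDerivWithinAt_setOf_nonneg_lt hX htT).sub continuousOn_const)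
    ((continuousOn_Icc_of_hasDerivWithinAt_setOf_nonneg_lt hY htT).sub continuousOn_const)
    (fun s hs =>
      (hasDerivWithinAt_Ici_of_hasDerivWithinAt_setOf_nonneg_lt hX htT s hs).sub_const X₂)
    (fun s hs =>
      (hasDerivWithinAt_Ici_of_hasDerivWithinAt_setOf_nonneg_lt hY htT s hs).sub_const Y₂)
    (fun s hs hXs hYs => by
      obtain ⟨hs0, hsT⟩ := hdomain s hs
      exact ⟨xField_le hm.le hXY₂ (hXnn s hs0 hsT) (sub_neg.1 hYs).le,
        yField_le hP₂ hN hNY₂ (hXnn s hs0 hsT) (sub_neg.1 hXs).le (sub_neg.1 hYs).le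
          (hZnn s hs0 hsT)⟩)
    (sub_neg.2 hX0) (sub_neg.2 hY0)
  exact ⟨sub_neg.1 key.1, sub_neg.1 key.2⟩

/-- Lemma 5.1: the region {X < X₂, Y < Y₂} is positively invariant for the
dynamical system X' = X((m-1)Y - 2X), Y' = -Y² - (β/α)Y + X - NXY - XZ,
Z' = Z((p-1)Y + σX), for solutions with X ≥ 0 and Z ≥ 0 on [0,T), T ∈ (0,∞]. -/
theorem region_below_P2_invariant (m p σ : ℝ) (N : ℕ)
    (hm : 1 < m) (hp1 : 1 ≤ p) (hpm : p < m)
    (hL : 0 < σ * (m - 1) + 2 * (p - 1)) (hN : 1 ≤ N)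
    (α β X₂ Y₂ : ℝ)
    (hα : α = (σ + 2) / (σ * (m - 1) + 2 * (p - 1)))
    (hβ : β = (m - p) / (σ * (m - 1) + 2 * (p - 1)))
    (hX₂ : X₂ = (m - 1) / (2 * α * (m * (N : ℝ) - (N : ℝ) + 2)))
    (hY₂ : Y₂ = 1 / (α * (m * (N : ℝ) - (N : ℝ) + 2)))
    (T : EReal) (hT : 0 < T)
    (X Y Z : ℝ → ℝ)
    (hX : ∀ t : ℝ, 0 ≤ t → (t : EReal) < T →
      HasDerivWithinAt X (X t * ((m - 1) * Y t - 2 * X t))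
        {s : ℝ | 0 ≤ s ∧ (s : EReal) < T} t)
    (hY : ∀ t : ℝ, 0 ≤ t → (t : EReal) < T →
      HasDerivWithinAt Y
        (-(Y t) ^ 2 - (β / α) * Y t + X t - (N : ℝ) * X t * Y t - X t * Z t)
        {s : ℝ | 0 ≤ s ∧ (s : EReal) < T} t)
    (hZ : ∀ t : ℝ, 0 ≤ t → (t : EReal) < T →
      HasDerivWithinAt Z (Z t * ((p - 1) * Y t + σ * X t))
        {s : ℝ | 0 ≤ s ∧ (s : EReal) < T} t)
    (hXnn : ∀ t : ℝ, 0 ≤ t → (t : EReal) < T → 0 ≤ X t)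
    (hZnn : ∀ t : ℝ, 0 ≤ t → (t : EReal) < T → 0 ≤ Z t)
    (hX0 : X 0 < X₂) (hY0 : Y 0 < Y₂) :
    ∀ t : ℝ, 0 ≤ t → (t : EReal) < T → X t < X₂ ∧ Y t < Y₂ :=
  region_below_P2_invariant_general m p σ N hm hpm hL α β X₂ Y₂ hα hβ hX₂ hY₂ T X Y Z hX hY hXnn
    hZnn hX0 hY0
end

section
/- Let N ≥ 2 be an integer, m > 1, −2 < σ ≤ 0, and let p satisfy 1 ≤ p < m and σ(m−1) + 2(p−1) > 0. Set α = (σ+2)/(σ(m−1)+2(p−1)), X₂ = (m−1)/(2α(mN−N+2)), Y₂ = 1/(α(mN−N+2)). Then (1 − N − σ/2)·X₂·Y₂ − m·Y₂² − ((2N+σ−2)(σ+2)/(8m))·X₂² + (2m/(m+1))·X₂ > 0; that is, the critical point P₂ = (X₂,Y₂,0) lies strictly below the surface W = (1−N−σ/2)XY − mY² − ((2N+σ−2)(σ+2)/(8m))X² + (2m/(m+1))X in the (X,Y,W) phase space. -/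
open Set Filter

set_option maxHeartbeats 1600000 in
/-- Lemma 5.4, first part: the critical point P₂ = (X₂, Y₂, 0) lies strictly below
the barrier surface W = (1-N-σ/2)XY - mY² - ((2N+σ-2)(σ+2)/(8m))X² + (2m/(m+1))X. -/
theorem P2_below_barrier_surface (m p σ : ℝ) (N : ℕ)
    (hN : 2 ≤ N) (hm : 1 < m) (hσ1 : -2 < σ) (hσ2 : σ ≤ 0)
    (hp1 : 1 ≤ p) (hpm : p < m) (hL : 0 < σ * (m - 1) + 2 * (p - 1))
    (α X₂ Y₂ : ℝ)
    (hα : α = (σ + 2) / (σ * (m - 1) + 2 * (p - 1)))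
    (hX₂ : X₂ = (m - 1) / (2 * α * (m * (N : ℝ) - (N : ℝ) + 2)))
    (hY₂ : Y₂ = 1 / (α * (m * (N : ℝ) - (N : ℝ) + 2))) :
    0 < (1 - (N : ℝ) - σ / 2) * X₂ * Y₂ - m * Y₂ ^ 2
        - (2 * (N : ℝ) + σ - 2) * (σ + 2) / (8 * m) * X₂ ^ 2
        + 2 * m / (m + 1) * X₂ := by
  set n : ℝ := (N : ℝ) with hn'
  have hn : (2 : ℝ) ≤ n := by rw [hn']; exact_mod_cast hN
  set L : ℝ := σ * (m - 1) + 2 * (p - 1) with hL'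
  have hs2 : 0 < σ + 2 := by linarith
  have hK : (0 : ℝ) < m * n - n + 2 := by nlinarith
  set K : ℝ := m * n - n + 2 with hK'
  have hαpos : 0 < α := by rw [hα]; exact div_pos hs2 hL
  set A : ℝ := α * K with hA'
  have hApos : 0 < A := mul_pos hαpos hK
  have hLlt : L < (σ + 2) * (m - 1) := by rw [hL']; nlinarith
  have hAK : K < A * (m - 1) := by
    have h1 : K * L < (σ + 2) * K * (m - 1) := by nlinarith
    have h2 : A * (m - 1) = (σ + 2) * K * (m - 1) / L := by
      rw [hA', hα]; field_simp
    rw [h2, lt_div_iff₀ hL]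
    linarith
  -- the "F" part with K : nonneg
  have hF : 0 ≤ 32 * m * (m + 1) *
      ((1 - n - σ / 2) * (m - 1) / 2 - m
        - (2 * n + σ - 2) * (σ + 2) * (m - 1) ^ 2 / (32 * m)
        + m * K / (m + 1)) := by
    have hmne : m ≠ 0 := by linarith
    have hm1ne : m + 1 ≠ 0 := by linarith
    have e : 32 * m * (m + 1) *
        ((1 - n - σ / 2) * (m - 1) / 2 - m
          - (2 * n + σ - 2) * (σ + 2) * (m - 1) ^ 2 / (32 * m)
          + m * K / (m + 1))
        = (m - 1) * (-16 * σ)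
          + (m - 1) ^ 2 * (8 * n - 8 - 24 * σ - 2 * σ ^ 2 - 4 * n * σ)
          + (m - 1) ^ 3 * (12 * n - 12 - 8 * σ - σ ^ 2 - 2 * n * σ) := by
      rw [hK']; field_simp; ring
    rw [e]
    have h0 : 0 ≤ (m - 1) * (-16 * σ) := by nlinarith
    have h1 : 0 ≤ (m - 1) ^ 2 * (8 * n - 8 - 24 * σ - 2 * σ ^ 2 - 4 * n * σ) :=
      mul_nonneg (by positivity) (by nlinarith)
    have h2 : 0 ≤ (m - 1) ^ 3 * (12 * n - 12 - 8 * σ - σ ^ 2 - 2 * n * σ) :=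
      mul_nonneg (by nlinarith) (by nlinarith)
    linarith
  have hFK : 0 ≤ (1 - n - σ / 2) * (m - 1) / 2 - m
      - (2 * n + σ - 2) * (σ + 2) * (m - 1) ^ 2 / (32 * m)
      + m * K / (m + 1) := by
    have hpos : (0 : ℝ) < 32 * m * (m + 1) := by nlinarith
    nlinarith [hF, hpos]
  -- G with A : positive
  have hG : 0 < (1 - n - σ / 2) * (m - 1) / 2 - m
      - (2 * n + σ - 2) * (σ + 2) * (m - 1) ^ 2 / (32 * m)
      + m * (m - 1) * A / (m + 1) := by
    have hstep : m * K / (m + 1) < m * (m - 1) * A / (m + 1) := by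
      have h3 : m * K < m * (m - 1) * A := by nlinarith
      exact (div_lt_div_iff_of_pos_right (by linarith)).mpr h3
    linarith
  have hαne : α ≠ 0 := ne_of_gt hαpos
  have hKne : K ≠ 0 := ne_of_gt hK
  have hmne : m ≠ 0 := by positivity
  have hm1ne : m + 1 ≠ 0 := by positivity
  have egoal : (1 - n - σ / 2) * X₂ * Y₂ - m * Y₂ ^ 2
        - (2 * n + σ - 2) * (σ + 2) / (8 * m) * X₂ ^ 2
        + 2 * m / (m + 1) * X₂
      = ((1 - n - σ / 2) * (m - 1) / 2 - m
          - (2 * n + σ - 2) * (σ + 2) * (m - 1) ^ 2 / (32 * m)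
          + m * (m - 1) * A / (m + 1)) / A ^ 2 := by
    rw [hX₂, hY₂, hA', hK']
    field_simp
    ring
  rw [egoal]
  positivity
end

section
/- Let m > 1, 1 ≤ p < m, let σ be a real number with σ(m−1) + 2(p−1) > 0, let N ≥ 1 be an integer, and set α = (σ+2)/(σ(m−1)+2(p−1)) and β = (m−p)/(σ(m−1)+2(p−1)). Then the planar system X' = X((m−1)Y − 2X), Y' = −Y² − (β/α)Y + X − N X Y has no nonconstant periodic solution lying in the half-plane {X > 0}; that is, there is no differentiable nonconstant function (X,Y) : ℝ → ℝ² solving the system with X(t) > 0 for all t and (X,Y)(t + τ) = (X,Y)(t) for some τ > 0 and all t. -/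
/-!
With `w = (m - 1) Y - 2 X`, `e = 2 / (m - 1)` and `k = β / α ≥ 0`, the system reads
`X' = X w`, `w' = -(c X + k) w - (e / 2) w² - a X² - b X` for constants `c > 0`, `a`, `b`.
The weight `X ^ e` absorbs the `w²` term, so that
`V = X ^ e w² / 2 + a X ^ (e + 2) / (e + 2) + b X ^ (e + 1) / (e + 1)`
satisfies `V' = -(c X + k) X ^ e w² ≤ 0` in `{X > 0}`. On a periodic orbit `V` is therefore
constant, so `w ≡ 0`, hence `X' ≡ 0` and the orbit is a single point.
-/

theorem Antitone.apply_eq_of_periodic {α β : Type*} [AddCommGroup α] [LinearOrder α]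
    [IsOrderedAddMonoid α] [Archimedean α] [PartialOrder β] {f : α → β} {c : α}
    (hf : Antitone f) (hper : Function.Periodic f c) (hc : 0 < c) (x y : α) : f x = f y := by
  obtain ⟨z, ⟨hyz, hzy⟩, hxz⟩ := hper.exists_mem_Ico hc x y
  rw [hxz]
  exact le_antisymm (hf hyz) (hper y ▸ hf hzy.le)

noncomputable def lyapunov (e a b x w : ℝ) : ℝ :=
  x ^ e * w ^ 2 / 2 + a / (e + 2) * x ^ (e + 2) + b / (e + 1) * x ^ (e + 1)

theorem hasDerivAt_lyapunov {x w : ℝ → ℝ} {e a b r t : ℝ} (he1 : e + 1 ≠ 0) (he2 : e + 2 ≠ 0)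
    (hx : HasDerivAt x (x t * w t) t)
    (hw : HasDerivAt w (-(r * w t) - e / 2 * w t ^ 2 - a * x t ^ 2 - b * x t) t)
    (hxt : x t ≠ 0) :
    HasDerivAt (fun s ↦ lyapunov e a b (x s) (w s)) (-(r * (x t ^ e * w t ^ 2))) t := by
  have hxe := hx.rpow_const (p := e) (Or.inl hxt)
  have hxe2 := hx.rpow_const (p := e + 2) (Or.inl hxt)
  have hxe1 := hx.rpow_const (p := e + 1) (Or.inl hxt)
  refine (((hxe.mul (hw.pow 2)).div_const 2).add (hxe2.const_mul (a / (e + 2))) |>.add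
    (hxe1.const_mul (b / (e + 1)))).congr_deriv ?_
  have hpow (q : ℝ) : x t ^ (q + 1) = x t ^ q * x t := Real.rpow_add_one hxt q
  have hpow' : x t ^ e = x t ^ (e - 1) * x t := by rw [← hpow, sub_add_cancel]
  rw [show e + 2 - 1 = e + 1 by ring, show e + 1 - 1 = e by ring, hpow, Pi.pow_apply, hpow']
  field_simp
  ring

section PlanarSystem

variable {X Y : ℝ → ℝ} {m k N : ℝ}

theorem hasDerivAt_nullcline_defect {t : ℝ} (hm : m ≠ 1)
    (hX : HasDerivAt X (X t * ((m - 1) * Y t - 2 * X t)) t)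
    (hY : HasDerivAt Y (-(Y t) ^ 2 - k * Y t + X t - N * X t * Y t) t) :
    HasDerivAt (fun s ↦ (m - 1) * Y s - 2 * X s)
      (-(((4 / (m - 1) + 2 + N) * X t + k) * ((m - 1) * Y t - 2 * X t))
        - 2 / (m - 1) / 2 * ((m - 1) * Y t - 2 * X t) ^ 2
        - (4 / (m - 1) + 2 * N) * X t ^ 2 - (2 * k - (m - 1)) * X t) t := by
  refine ((hY.const_mul (m - 1)).sub (hX.const_mul 2)).congr_deriv ?_
  have hm' : m - 1 ≠ 0 := sub_ne_zero.mpr hm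
  field_simp
  ring

theorem nullcline_of_periodic_solution {τ : ℝ} (hm : 1 < m) (hk : 0 ≤ k) (hN : 0 ≤ N)
    (hX : ∀ t, HasDerivAt X (X t * ((m - 1) * Y t - 2 * X t)) t)
    (hY : ∀ t, HasDerivAt Y (-(Y t) ^ 2 - k * Y t + X t - N * X t * Y t) t)
    (hXpos : ∀ t, 0 < X t) (hXper : Function.Periodic X τ) (hYper : Function.Periodic Y τ)
    (hτ : 0 < τ) (t : ℝ) : (m - 1) * Y t = 2 * X t := by
  set e := 2 / (m - 1)
  have he : 0 < e := div_pos two_pos (sub_pos.mpr hm)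
  set V := fun s ↦ lyapunov e (4 / (m - 1) + 2 * N) (2 * k - (m - 1)) (X s)
    ((m - 1) * Y s - 2 * X s)
  have hV (s : ℝ) := hasDerivAt_lyapunov (by linarith) (by linarith) (hX s)
    (hasDerivAt_nullcline_defect hm.ne' (hX s) (hY s)) (hXpos s).ne'
  have hrate (s : ℝ) : 0 < (4 / (m - 1) + 2 + N) * X s + k := by
    have : 0 < 4 / (m - 1) + 2 + N := by positivity
    have := hXpos s
    positivity
  have hanti : Antitone V := antitone_of_deriv_nonpos (fun s ↦ (hV s).differentiableAt)
    fun s ↦ (hV s).deriv ▸ neg_nonpos.mpr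
      (mul_nonneg (hrate s).le (mul_nonneg (Real.rpow_nonneg (hXpos s).le e) (sq_nonneg _)))
  have hVper : Function.Periodic V τ := fun s ↦ by simp only [V, hXper s, hYper s]
  have hV0 : HasDerivAt V 0 t := (hasDerivAt_const t (V 0)).congr_of_eventuallyEq
    (.of_forall (hanti.apply_eq_of_periodic hVper hτ · 0))
  have := (hV t).unique hV0
  simp only [neg_eq_zero, mul_eq_zero, (hrate t).ne', false_or, pow_eq_zero_iff two_ne_zero,
    sub_eq_zero] at this
  exact this.resolve_left (Real.rpow_pos_of_pos (hXpos t) _).ne'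

end PlanarSystem

theorem no_periodic_orbit_in_plane_Z_zero_general (m p σ : ℝ) (N : ℕ)
    (hm : 1 < m) (hpm : p < m)
    (hL : 0 < σ * (m - 1) + 2 * (p - 1))
    (α β : ℝ)
    (hα : α = (σ + 2) / (σ * (m - 1) + 2 * (p - 1)))
    (hβ : β = (m - p) / (σ * (m - 1) + 2 * (p - 1))) :
    ¬ ∃ (X Y : ℝ → ℝ) (τ : ℝ), 0 < τ ∧
      (∀ t : ℝ, HasDerivAt X (X t * ((m - 1) * Y t - 2 * X t)) t) ∧
      (∀ t : ℝ, HasDerivAt Y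
        (-(Y t) ^ 2 - (β / α) * Y t + X t - (N : ℝ) * X t * Y t) t) ∧
      (∀ t : ℝ, 0 < X t) ∧
      (∀ t : ℝ, X (t + τ) = X t ∧ Y (t + τ) = Y t) ∧
      (∃ t₁ t₂ : ℝ, X t₁ ≠ X t₂ ∨ Y t₁ ≠ Y t₂) := by
  rintro ⟨X, Y, τ, hτ, hX, hY, hXpos, hper, t₁, t₂, hne⟩
  have hk : 0 ≤ β / α := by
    rw [hα, hβ]
    exact div_nonneg (div_nonneg (by linarith) hL.le) (div_nonneg (by nlinarith) hL.le)
  have hnull := nullcline_of_periodic_solution hm hk N.cast_nonneg hX hY hXpos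
    (fun t ↦ (hper t).1) (fun t ↦ (hper t).2) hτ
  have hXconst : ∀ s t, X s = X t := by
    refine is_const_of_deriv_eq_zero (fun t ↦ (hX t).differentiableAt) fun t ↦ ?_
    rw [(hX t).deriv, ← hnull, sub_self, mul_zero]
  have hYconst : Y t₁ = Y t₂ := mul_left_cancel₀ (sub_pos.mpr hm).ne' <| by
    rw [hnull, hnull, hXconst t₁ t₂]
  exact hne.elim (· (hXconst t₁ t₂)) (· hYconst)

/-- Dulac's criterion argument (proof of Theorem 1.2, Step 5): the planar system
X' = X((m-1)Y - 2X), Y' = -Y² - (β/α)Y + X - NXY (restriction of the full system to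
the invariant plane {Z = 0}) has no nonconstant periodic orbit in the half-plane
{X > 0}. -/
theorem no_periodic_orbit_in_plane_Z_zero (m p σ : ℝ) (N : ℕ)
    (hm : 1 < m) (hp1 : 1 ≤ p) (hpm : p < m)
    (hL : 0 < σ * (m - 1) + 2 * (p - 1)) (hN : 1 ≤ N)
    (α β : ℝ)
    (hα : α = (σ + 2) / (σ * (m - 1) + 2 * (p - 1)))
    (hβ : β = (m - p) / (σ * (m - 1) + 2 * (p - 1))) :
    ¬ ∃ (X Y : ℝ → ℝ) (τ : ℝ), 0 < τ ∧
      (∀ t : ℝ, HasDerivAt X (X t * ((m - 1) * Y t - 2 * X t)) t) ∧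
      (∀ t : ℝ, HasDerivAt Y
        (-(Y t) ^ 2 - (β / α) * Y t + X t - (N : ℝ) * X t * Y t) t) ∧
      (∀ t : ℝ, 0 < X t) ∧
      (∀ t : ℝ, X (t + τ) = X t ∧ Y (t + τ) = Y t) ∧
      (∃ t₁ t₂ : ℝ, X t₁ ≠ X t₂ ∨ Y t₁ ≠ Y t₂) :=
  no_periodic_orbit_in_plane_Z_zero_general m p σ N hm hpm hL α β hα hβ
end
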